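/- arXiv:1105.5740 — 2 statements merged into one kernel-verified Lean document; each statement's English description precedes it below -/
import Mathlib

section
/- There is a set Ω̂₁ ⊂ Ω₀ with P(Ω̂₁) = 1 such that for every ω ∈ Ω̂₁ there exists a positive integer M(ω) with the property: for all n ≥ M(ω), all x ∈ P(ω) with |x|_∞ = n, and all unit vectors e ∈ Z^d, one has γ_e(T_x ω) ≤ n. (Equivalently, the events A_n := {γ_e∘T_x > n for some x ∈ P with |x|_∞ = n and some unit e} satisfy Σ_n P(A_n) < ∞, so only finitely many A_n occur, P-a.s.) -/
open MeasureTheory ProbabilityTheory Filter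
open scoped ENNReal Topology

namespace RWDPP

attribute [local instance] Classical.propDecidable


/-- Configuration space `Ω = {0,1}^{ℤ^d}`. -/
abbrev Cfg (d : ℕ) := (Fin d → ℤ) → Bool

/-- Canonical shift `T_y ω (x) = ω (x + y)`. -/
def shift (d : ℕ) (y : Fin d → ℤ) (ω : Cfg d) : Cfg d := fun x => ω (x + y)

/-- Embedding of `ℤ^d` into `ℝ^d` (with the Euclidean norm). -/
def toE (d : ℕ) (x : Fin d → ℤ) : EuclideanSpace ℝ (Fin d) := WithLp.toLp 2 (fun i => (x i : ℝ))

/-- Euclidean norm `|x|` of a lattice point. -/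
noncomputable def nrm (d : ℕ) (x : Fin d → ℤ) : ℝ := ‖toE d x‖

/-- Sup norm `|x|_∞` of a lattice point. -/
def nrmInf (d : ℕ) (x : Fin d → ℤ) : ℕ := Finset.univ.sup fun i => (x i).natAbs

/-- The `2d` unit vectors of `ℤ^d`. -/
def unitVecs (d : ℕ) : Set (Fin d → ℤ) :=
  {e | ∃ i : Fin d, e = Pi.single i 1 ∨ e = Pi.single i (-1)}

/-- `γ_e(ω) = inf {k ≥ 1 : ω(k e) = 1}`. -/
noncomputable def gamma (d : ℕ) (e : Fin d → ℤ) (ω : Cfg d) : ℕ :=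
  sInf {k : ℕ | 1 ≤ k ∧ ω ((k : ℤ) • e) = true}

/-- The nearest neighbor of `x` in direction `e`: `x + γ_e(T_x ω) e`. -/
noncomputable def nbr (d : ℕ) (ω : Cfg d) (x e : Fin d → ℤ) : Fin d → ℤ :=
  x + (gamma d e (shift d x ω) : ℤ) • e

/-- The set `N_x(ω)` of the `2d` nearest neighbors of `x`. -/
noncomputable def nbrs (d : ℕ) (ω : Cfg d) (x : Fin d → ℤ) : Set (Fin d → ℤ) :=
  {y | ∃ e ∈ unitVecs d, y = nbr d ω x e}

/-- `(p 0, …, p m)` is a `𝒫(ω)`-nearest neighbor path. -/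
def IsPath (d : ℕ) (ω : Cfg d) (p : ℕ → Fin d → ℤ) (m : ℕ) : Prop :=
  ω (p 0) = true ∧ ∀ k, 1 ≤ k → k ≤ m → p k ∈ nbrs d ω (p (k - 1))

/-- The event `Ω₀ = {ω : ω(0) = 1}`. -/
def Omega0 (d : ℕ) : Set (Cfg d) := {ω | ω 0 = true}

/-- The σ-field generated by the coordinates in `A`. -/
def coordSigma (d : ℕ) (A : Set (Fin d → ℤ)) : MeasurableSpace (Cfg d) :=
  MeasurableSpace.comap (fun ω (x : A) => ω x) inferInstance

/-- Assumptions (A1)–(A3) on the law `Q` of the discrete point process. -/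
structure Assumptions (d : ℕ) (Q : Measure (Cfg d)) : Prop where
  prob : IsProbabilityMeasure Q
  a1_pos : 0 < Q (Omega0 d)
  a1_lt : Q (Omega0 d) < 1
  a2 : ∃ ℓ : ℝ, 0 < ℓ ∧ ∀ A B : Set (Fin d → ℤ),
    (∀ x ∈ A, ∀ y ∈ B, ℓ ≤ nrm d (x - y)) →
      Indep (coordSigma d A) (coordSigma d B) Q
  a3 : ∀ y : Fin d → ℤ, MeasurePreserving (shift d y) Q Q

/-- The conditioned measure `P = Q(·|Ω₀)`. -/
noncomputable def condP (d : ℕ) (Q : Measure (Cfg d)) : Measure (Cfg d) := Q[|Omega0 d]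

/-- One-step transition probability of the RWDPP. -/
noncomputable def stepP (d : ℕ) (ω : Cfg d) (x y : Fin d → ℤ) : ℝ :=
  if y ∈ nbrs d ω x then 1 / (2 * d) else 0

/-- Discrete trajectory space. -/
abbrev Traj (d : ℕ) := ℕ → Fin d → ℤ

/-- `μ` is the family of quenched laws `P_ω^z` of the RWDPP in the environment `ω`:
`μ z` is a probability measure with `μ z (X₀ = z) = 1` under which `(X_n)` is the Markov
chain with transition probability `1/(2d)` to each nearest neighbor. -/
def IsQuenchedLaw (d : ℕ) (ω : Cfg d) (μ : (Fin d → ℤ) → Measure (Traj d)) : Prop :=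
  (∀ z, IsProbabilityMeasure (μ z)) ∧
  ∀ z, ω z = true → ∀ n : ℕ, ∀ x : Traj d,
    μ z {p | ∀ k ≤ n, p k = x k} =
      (if x 0 = z then 1 else 0) *
        ∏ k ∈ Finset.range n, ENNReal.ofReal (stepP d ω (x k) (x (k + 1)))

/-- `P(N_{t} - N_{s} = k)` for a rate-one Poisson process, `r = t - s`. -/
noncomputable def poissonProb (r : ℝ) (k : ℕ) : ℝ≥0∞ :=
  ENNReal.ofReal (Real.exp (-r) * r ^ k / (Nat.factorial k))

/-- `ν` is the law of (the path of) a rate-one Poisson process `(N_t)_{t ≥ 0}`. -/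
def IsPoissonPath (ν : Measure (ℝ → ℕ)) : Prop :=
  IsProbabilityMeasure ν ∧
  (∀ᵐ η ∂ν, Monotone η ∧ ∀ t : ℝ, t ≤ 0 → η t = 0) ∧
  ∀ m : ℕ, ∀ t : ℕ → ℝ, 0 ≤ t 0 → Monotone t → ∀ k : ℕ → ℕ,
    ν {η | ∀ i < m, η (t (i + 1)) - η (t i) = k i} =
      ∏ i ∈ Finset.range m, poissonProb (t (i + 1) - t i) (k i)

/-- The continuous-time walk `Y_t = X_{N_t}`, realized on the product of the trajectory
space of the discrete walk and the path space of the Poisson process. -/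
def Yt (d : ℕ) (q : Traj d × (ℝ → ℕ)) (t : ℝ) : Fin d → ℤ := q.1 (q.2 t)

/-- `τ_n = inf {t ≥ 0 : |Y_t - Y_0| ≥ n}`. -/
noncomputable def hitTime (d : ℕ) (n : ℕ) (q : Traj d × (ℝ → ℕ)) : ℝ :=
  sInf {t : ℝ | 0 ≤ t ∧ (n : ℝ) ≤ nrm d (Yt d q t - Yt d q 0)}

/-- `max_{x ∈ 𝒫(ω), |x| ≤ n} g x` (Euclidean balls). -/
noncomputable def maxOn (d : ℕ) (ω : Cfg d) (g : (Fin d → ℤ) → ℝ) (n : ℕ) : ℝ :=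
  sSup {r : ℝ | ∃ x, ω x = true ∧ nrm d x ≤ (n : ℝ) ∧ r = g x}

/-- `max_{x ∈ 𝒫(ω), |x|_∞ ≤ n} g x` (sup-norm boxes). -/
noncomputable def maxOnInf (d : ℕ) (ω : Cfg d) (g : (Fin d → ℤ) → ℝ) (n : ℕ) : ℝ :=
  sSup {r : ℝ | ∃ x, ω x = true ∧ nrmInf d x ≤ n ∧ r = g x}

/-- The `2d` unit vectors, as a finite set. -/
noncomputable def unitFinset (d : ℕ) : Finset (Fin d → ℤ) :=
  (Finset.univ.image fun i : Fin d => (Pi.single i 1 : Fin d → ℤ)) ∪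
    (Finset.univ.image fun i : Fin d => (Pi.single i (-1) : Fin d → ℤ))

/-- `x ↦ x + ψ x` is harmonic on `𝒫(ω)` for the RWDPP transition probability. -/
def IsHarmonicDeform (d : ℕ) (ω : Cfg d) (ψ : (Fin d → ℤ) → EuclideanSpace ℝ (Fin d)) : Prop :=
  ∀ x, ω x = true →
    (1 / (2 * (d : ℝ))) • ∑ e ∈ unitFinset d, (toE d (nbr d ω x e) + ψ (nbr d ω x e))
      = toE d x + ψ x

/-- `‖(χ(x,·) - χ(y,·)) 1{x ∈ 𝒫} 1{y ∈ N_x}‖_{L²(P)}²`. -/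
noncomputable def corrL2sq (d : ℕ) (P : Measure (Cfg d))
    (χ : (Fin d → ℤ) → Cfg d → EuclideanSpace ℝ (Fin d)) (x y : Fin d → ℤ) : ℝ≥0∞ :=
  ∫⁻ ω, ENNReal.ofReal
    (if ω x = true ∧ y ∈ nbrs d ω x then ‖χ x ω - χ y ω‖ ^ 2 else 0) ∂P

/-- Graph distance on `𝒫(ω)` (`⊤` if not connected). -/
noncomputable def graphDist (d : ℕ) (ω : Cfg d) (x y : Fin d → ℤ) : ℕ∞ :=
  sInf {m : ℕ∞ | ∃ k : ℕ, m = (k : ℕ∞) ∧ ∃ p : Traj d, p 0 = x ∧ p k = y ∧ IsPath d ω p k}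

/-!
Fix a site `x` and a unit vector `e`, and let `L := ⌈ℓ⌉`. The sites `x + jL e`,
`1 ≤ j ≤ ⌊n/L⌋`, are pairwise at distance at least `ℓ`, so by (A2) and stationarity they are all
empty with probability `q ^ ⌊n/L⌋`, where `q = Q(Ω₀ᶜ) < 1`. A union bound over the `(2n+1)^d`
sites of the box `|x|_∞ ≤ n` and the `2d` directions bounds the probability that some site of
the box sees no point within distance `n` in some direction by a polynomial times a geometric
term. This is summable, so by Borel–Cantelli `Q`-a.s. only finitely many of these events occur,
and `P ≪ Q` transfers this to `P`.
-/

section Lattice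

variable {d : ℕ}

lemma toE_single (i : Fin d) (a : ℤ) :
    toE d (Pi.single i a) = EuclideanSpace.single i (a : ℝ) := by
  ext j
  by_cases h : j = i
  · subst h; simp [toE]
  · simp [toE, h]

lemma nrm_zsmul_of_mem_unitVecs {e : Fin d → ℤ} (he : e ∈ unitVecs d) (c : ℤ) :
    nrm d (c • e) = |(c : ℝ)| := by
  obtain ⟨i, rfl | rfl⟩ := he <;> simp [nrm, ← Pi.single_smul, toE_single]

lemma mem_unitFinset {e : Fin d → ℤ} : e ∈ unitFinset d ↔ e ∈ unitVecs d := by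
  simp [unitFinset, unitVecs, eq_comm, exists_or]

lemma card_unitFinset_le : (unitFinset d).card ≤ 2 * d :=
  (Finset.card_union_le _ _).trans <| by
    have h₁ := Finset.card_image_le (s := Finset.univ)
      (f := fun i : Fin d => (Pi.single i 1 : Fin d → ℤ))
    have h₂ := Finset.card_image_le (s := Finset.univ)
      (f := fun i : Fin d => (Pi.single i (-1) : Fin d → ℤ))
    simp only [Finset.card_univ, Fintype.card_fin] at h₁ h₂
    omega

noncomputable def box (d n : ℕ) : Finset (Fin d → ℤ) :=
  Fintype.piFinset fun _ => Finset.Icc (-(n : ℤ)) n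

lemma card_box (n : ℕ) : (box d n).card = (2 * n + 1) ^ d := by
  simp only [box, Fintype.card_piFinset, Finset.prod_const, Int.card_Icc, Finset.card_univ,
    Fintype.card_fin]
  congr 1
  omega

lemma mem_box_of_nrmInf_le {x : Fin d → ℤ} {n : ℕ} (h : nrmInf d x ≤ n) : x ∈ box d n := by
  refine Fintype.mem_piFinset.2 fun i => Finset.mem_Icc.2 (abs_le.1 ?_)
  have : (x i).natAbs ≤ n :=
    (Finset.le_sup (f := fun i => (x i).natAbs) (Finset.mem_univ i)).trans h
  rw [Int.abs_eq_natAbs]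
  exact_mod_cast this

def gapEvent (d : ℕ) (x e : Fin d → ℤ) (n : ℕ) : Set (Cfg d) :=
  {ω | ∀ k : ℕ, 1 ≤ k → k ≤ n → ω (x + (k : ℤ) • e) = false}

noncomputable def badEvent (d n : ℕ) : Set (Cfg d) :=
  ⋃ x ∈ box d n, ⋃ e ∈ unitFinset d, gapEvent d x e n

lemma gapEvent_subset_badEvent {x e : Fin d → ℤ} {n : ℕ} (hx : nrmInf d x ≤ n)
    (he : e ∈ unitVecs d) : gapEvent d x e n ⊆ badEvent d n := fun _ hω =>
  Set.mem_biUnion (mem_box_of_nrmInf_le hx) (Set.mem_biUnion (mem_unitFinset.2 he) hω)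

end Lattice

lemma summable_pow_mul_pow_div (k : ℕ) {L : ℕ} (hL : L ≠ 0) {q : ℝ} (hq0 : 0 ≤ q)
    (hq1 : q < 1) : Summable fun n : ℕ => (n : ℝ) ^ k * q ^ (n / L) := by
  -- Taking `r ≥ 1/2` rather than `r = q` keeps `r⁻¹` meaningful when `q = 0`.
  set r := max q (1 / 2)
  have hr0 : 0 < r := lt_max_of_lt_right one_half_pos
  set ρ := r ^ ((L : ℝ)⁻¹)
  have hρL : ρ ^ L = r := Real.rpow_inv_natCast_pow hr0.le hL
  have hρ0 : 0 < ρ := Real.rpow_pos_of_pos hr0 _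
  have hρ1 : ρ < 1 := Real.rpow_lt_one hr0.le (max_lt hq1 (by norm_num)) (by positivity)
  have hbound : ∀ n : ℕ, q ^ (n / L) ≤ r⁻¹ * ρ ^ n := by
    intro n
    calc q ^ (n / L) ≤ r ^ (n / L) := pow_le_pow_left₀ hq0 (le_max_left _ _) _
      _ = r⁻¹ * (ρ ^ (L * (n / L)) * ρ ^ L) := by
        rw [pow_mul, hρL]
        field_simp
      _ ≤ r⁻¹ * (ρ ^ (L * (n / L)) * ρ ^ (n % L)) := by
        have := pow_le_pow_of_le_one hρ0.le hρ1.le (Nat.mod_lt n (Nat.pos_of_ne_zero hL)).le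
        gcongr
      _ = r⁻¹ * ρ ^ n := by rw [← pow_add, Nat.div_add_mod]
  refine .of_nonneg_of_le (fun n => by positivity)
    (fun n => mul_le_mul_of_nonneg_left (hbound n) (by positivity)) ?_
  have hρ : ‖ρ‖ < 1 := by rwa [Real.norm_of_nonneg hρ0.le]
  exact ((summable_pow_mul_geometric_of_norm_lt_one k hρ).mul_left r⁻¹).congr fun n => by ring

section Independence

variable {d : ℕ} {Q : Measure (Cfg d)}

lemma measurableSet_coordSigma_eval {A : Set (Fin d → ℤ)} {y : Fin d → ℤ} (hy : y ∈ A)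
    (b : Bool) : MeasurableSet[coordSigma d A] {ω : Cfg d | ω y = b} :=
  ⟨(fun g : A → Bool => g ⟨y, hy⟩) ⁻¹' {b},
    measurable_pi_apply (⟨y, hy⟩ : A) (measurableSet_singleton b), rfl⟩

lemma measurableSet_omega0 : MeasurableSet (Omega0 d) :=
  measurableSet_eq_fun (measurable_pi_apply 0) measurable_const

lemma measure_eval_eq_false (hstat : ∀ y, MeasurePreserving (shift d y) Q Q) (y : Fin d → ℤ) :
    Q {ω : Cfg d | ω y = false} = Q (Omega0 d)ᶜ := by
  have : {ω : Cfg d | ω y = false} = shift d y ⁻¹' (Omega0 d)ᶜ := by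
    ext ω
    simp [shift, Omega0]
  rw [this, (hstat y).measure_preimage measurableSet_omega0.compl.nullMeasurableSet]

variable [IsProbabilityMeasure Q] (hstat : ∀ y, MeasurePreserving (shift d y) Q Q) {ℓ : ℝ}
  (hindep : ∀ A B : Set (Fin d → ℤ), (∀ x ∈ A, ∀ y ∈ B, ℓ ≤ nrm d (x - y)) →
    Indep (coordSigma d A) (coordSigma d B) Q)
include hstat hindep

lemma measure_biInter_eval_eq_false (y : ℕ → Fin d → ℤ)
    (hy : ∀ i j, i < j → ℓ ≤ nrm d (y i - y j)) (m : ℕ) :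
    Q (⋂ j ∈ Finset.range m, {ω : Cfg d | ω (y j) = false}) = Q (Omega0 d)ᶜ ^ m := by
  induction m with
  | zero => simp
  | succ m ih =>
    have hsep : ∀ a ∈ y '' Set.Iio m, ∀ b ∈ ({y m} : Set _), ℓ ≤ nrm d (a - b) := by
      rintro _ ⟨i, hi, rfl⟩ _ rfl
      exact hy i m hi
    have hpast : MeasurableSet[coordSigma d (y '' Set.Iio m)]
        (⋂ j ∈ Finset.range m, {ω : Cfg d | ω (y j) = false}) :=
      Finset.measurableSet_biInter _ fun j hj =>
        measurableSet_coordSigma_eval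
          (Set.mem_image_of_mem y (Set.mem_Iio.2 (Finset.mem_range.1 hj))) false
    rw [Finset.range_add_one, Finset.set_biInter_insert, Set.inter_comm,
      (Indep_iff _ _ _).1 (hindep _ _ hsep) _ _ hpast
        (measurableSet_coordSigma_eval (Set.mem_singleton _) false),
      ih, measure_eval_eq_false hstat, pow_succ]

lemma measure_gapEvent_le {L : ℕ} (hℓL : ℓ ≤ L) {e : Fin d → ℤ} (he : e ∈ unitVecs d)
    (x : Fin d → ℤ) (n : ℕ) : Q (gapEvent d x e n) ≤ Q (Omega0 d)ᶜ ^ (n / L) := by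
  set y : ℕ → Fin d → ℤ := fun j => x + (((j + 1) * L : ℕ) : ℤ) • e
  have hy : ∀ i j, i < j → ℓ ≤ nrm d (y i - y j) := by
    intro i j hij
    have : y i - y j = ((((i + 1) * L : ℕ) : ℤ) - (((j + 1) * L : ℕ) : ℤ)) • e := by
      simp only [y, sub_smul]; abel
    rw [this, nrm_zsmul_of_mem_unitVecs he]
    have hij' : (i : ℝ) + 1 ≤ j := by exact_mod_cast hij
    have hL0 : (0 : ℝ) ≤ L := L.cast_nonneg
    refine hℓL.trans ?_
    push_cast
    rw [abs_sub_comm, abs_of_nonneg (by nlinarith)]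
    nlinarith
  rw [← measure_biInter_eval_eq_false hstat hindep y hy]
  refine measure_mono fun ω hω => Set.mem_biInter fun j hj => hω _ ?_ ?_
  · have : 0 < L := Nat.pos_of_ne_zero fun h => by simp [h] at hj
    exact Nat.one_le_iff_ne_zero.2 (Nat.mul_ne_zero j.succ_ne_zero this.ne')
  · calc (j + 1) * L ≤ n / L * L := Nat.mul_le_mul_right L (Finset.mem_range.1 hj)
      _ ≤ n := Nat.div_mul_le_self n L

lemma measure_badEvent_le {L : ℕ} (hℓL : ℓ ≤ L) (n : ℕ) :
    Q (badEvent d n) ≤ (((2 * n + 1) ^ d * (2 * d) : ℕ) : ℝ≥0∞) * Q (Omega0 d)ᶜ ^ (n / L) :=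
  calc Q (badEvent d n)
      ≤ ∑ x ∈ box d n, ∑ e ∈ unitFinset d, Q (gapEvent d x e n) :=
        (measure_biUnion_finset_le _ _).trans
          (Finset.sum_le_sum fun _ _ => measure_biUnion_finset_le _ _)
    _ ≤ ∑ x ∈ box d n, ∑ e ∈ unitFinset d, Q (Omega0 d)ᶜ ^ (n / L) := by
        gcongr with x _ e he
        exact measure_gapEvent_le hstat hindep hℓL (mem_unitFinset.1 he) x n
    _ = (((box d n).card * (unitFinset d).card : ℕ) : ℝ≥0∞) * Q (Omega0 d)ᶜ ^ (n / L) := by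
        simp [mul_assoc]
    _ ≤ (((2 * n + 1) ^ d * (2 * d) : ℕ) : ℝ≥0∞) * Q (Omega0 d)ᶜ ^ (n / L) := by
        rw [card_box]
        gcongr
        exact card_unitFinset_le

lemma tsum_measure_badEvent_ne_top {L : ℕ} (hℓL : ℓ ≤ L) (hL : L ≠ 0)
    (hq : Q (Omega0 d)ᶜ < 1) : ∑' n, Q (badEvent d n) ≠ ∞ := by
  set q := (Q (Omega0 d)ᶜ).toReal
  have hq0 : 0 ≤ q := ENNReal.toReal_nonneg
  have hq1 : q < 1 := by
    simpa using (ENNReal.toReal_lt_toReal (measure_ne_top _ _) ENNReal.one_ne_top).2 hq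
  set f : ℕ → ℝ := fun n => (((2 * n + 1) ^ d * (2 * d) : ℕ) : ℝ) * q ^ (n / L)
  have hf : Summable f := by
    refine .of_norm_bounded_eventually_nat
      ((summable_pow_mul_pow_div d hL hq0 hq1).mul_left (2 * d * 3 ^ d : ℝ)) ?_
    filter_upwards [eventually_ge_atTop 1] with n hn
    have hn' : (1 : ℝ) ≤ n := by exact_mod_cast hn
    rw [Real.norm_of_nonneg (by positivity)]
    calc f n = (2 * n + 1 : ℝ) ^ d * (2 * d) * q ^ (n / L) := by simp [f]
      _ ≤ (3 * n : ℝ) ^ d * (2 * d) * q ^ (n / L) := by gcongr; linarith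
      _ = 2 * d * 3 ^ d * (n ^ d * q ^ (n / L)) := by ring
  refine ne_top_of_le_ne_top ENNReal.ofReal_ne_top
    ((ENNReal.tsum_le_tsum fun n => ?_).trans_eq
      (ENNReal.ofReal_tsum_of_nonneg (fun n => by positivity) hf).symm)
  refine (measure_badEvent_le hstat hindep hℓL n).trans_eq ?_
  rw [ENNReal.ofReal_mul (by positivity), ENNReal.ofReal_natCast, ENNReal.ofReal_pow hq0,
    ENNReal.ofReal_toReal (measure_ne_top _ _)]

end Independence

theorem finite_neighbor_radius_general (d : ℕ)
    (Q : Measure (Cfg d)) (hQ : Assumptions d Q) :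
    ∃ Ωhat : Set (Cfg d), Ωhat ⊆ Omega0 d ∧ condP d Q Ωhat = 1 ∧
      ∀ ω ∈ Ωhat, ∃ M : ℕ, 1 ≤ M ∧ ∀ n : ℕ, M ≤ n →
        ∀ x : Fin d → ℤ, ω x = true → nrmInf d x = n →
          ∀ e ∈ unitVecs d, ∃ k : ℕ, 1 ≤ k ∧ k ≤ n ∧ ω (x + (k : ℤ) • e) = true := by
  have := hQ.prob
  obtain ⟨ℓ, hℓ, hindep⟩ := hQ.a2
  have hq : Q (Omega0 d)ᶜ < 1 := by
    rw [prob_compl_eq_one_sub measurableSet_omega0]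
    exact ENNReal.sub_lt_self ENNReal.one_ne_top one_ne_zero hQ.a1_pos.ne'
  have hBC := ae_eventually_notMem
    (tsum_measure_badEvent_ne_top hQ.a3 hindep (Nat.le_ceil ℓ) (Nat.ceil_pos.2 hℓ).ne' hq)
  refine ⟨Omega0 d ∩ {ω | ∀ᶠ n in atTop, ω ∉ badEvent d n}, Set.inter_subset_left, ?_, ?_⟩
  · rw [condP, measure_inter_conull (cond_absolutelyContinuous hBC),
      cond_apply_self hQ.a1_pos.ne' (measure_ne_top _ _)]
  · rintro ω ⟨-, hω⟩
    obtain ⟨N, hN⟩ := eventually_atTop.1 hω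
    refine ⟨max N 1, le_max_right _ _, fun n hn x _ hxn e he => ?_⟩
    have hgap : ω ∉ gapEvent d x e n := fun h =>
      hN n (le_of_max_le_left hn) (gapEvent_subset_badEvent hxn.le he h)
    simpa [gapEvent] using hgap

/-- There is a set `Ω̂₁ ⊆ Ω₀` of full `P`-measure such that for every
`ω ∈ Ω̂₁` there is `M(ω) ≥ 1` with: for all `n ≥ M(ω)`, all `x ∈ 𝒫(ω)` with `|x|_∞ = n`
and all unit vectors `e`, one has `γ_e(T_x ω) ≤ n` (i.e. there is a point of `𝒫(ω)` at
`x + k e` for some `1 ≤ k ≤ n`). -/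
theorem finite_neighbor_radius (d : ℕ) (hd : 1 ≤ d)
    (Q : Measure (Cfg d)) (hQ : Assumptions d Q) :
    ∃ Ωhat : Set (Cfg d), Ωhat ⊆ Omega0 d ∧ condP d Q Ωhat = 1 ∧
      ∀ ω ∈ Ωhat, ∃ M : ℕ, 1 ≤ M ∧ ∀ n : ℕ, M ≤ n →
        ∀ x : Fin d → ℤ, ω x = true → nrmInf d x = n →
          ∀ e ∈ unitVecs d, ∃ k : ℕ, 1 ≤ k ∧ k ≤ n ∧ ω (x + (k : ℤ) • e) = true :=
  finite_neighbor_radius_general d Q hQ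

end RWDPP
end

section
/- Almost-sure comparability of graph and Euclidean distances at logarithmic scales: with ρ, c₆ as in the exponential chemical-distance bound and c₇ := 2(d+2)/c₆, there is a set Ω̂₂ ⊂ Ω of full Q-measure such that for every ω ∈ Ω̂₂ there exists a positive integer N(ω) with: for all n ≥ N(ω) and all z, y ∈ P(ω) with |z| ≤ n and |z − y| ≥ c₇ log n, one has d_ω(z, y) ≥ ρ |z − y|. -/
open MeasureTheory ProbabilityTheory Filter
open scoped ENNReal Topology

namespace RWDPP

attribute [local instance] Classical.propDecidable


/-!
By stationarity and the translation invariance of the graph distance, a fixed pair `z, y` of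
points of `𝒫(ω)` at Euclidean distance `r` has `d_ω(z, y) ≤ ρ r` with probability at most
`c₅ e^{-c₆ r}`. When `r ≥ c₇ log n`, half of this decay is at most `n^{-(d+2)}`, while the other
half is summable over `y ∈ ℤ^d`; summing over the at most `(2n+1)^d` points `z` with `|z| ≤ n`
bounds the probability of a bad pair at scale `n` by `O(n^{-2})`. By Borel–Cantelli, almost
surely only finitely many scales have a bad pair.
-/

variable {d : ℕ}

lemma shift_shift (a b : Fin d → ℤ) (ω : Cfg d) :
    shift d a (shift d b ω) = shift d (a + b) ω := by
  funext u
  simp only [shift, add_assoc]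

lemma nbr_shift (z x e : Fin d → ℤ) (ω : Cfg d) :
    nbr d (shift d z ω) (x - z) e = nbr d ω x e - z := by
  rw [nbr, nbr, shift_shift, sub_add_cancel]
  abel

lemma IsPath.shift {ω : Cfg d} {p : ℕ → Fin d → ℤ} {m : ℕ} (h : IsPath d ω p m)
    (z : Fin d → ℤ) : IsPath d (shift d z ω) (fun k => p k - z) m := by
  refine ⟨by simpa [RWDPP.shift] using h.1, fun k hk hkm => ?_⟩
  obtain ⟨e, he, hpe⟩ := h.2 k hk hkm
  exact ⟨e, he, by rw [nbr_shift, ← hpe]⟩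

lemma graphDist_shift_le (z x y : Fin d → ℤ) (ω : Cfg d) :
    graphDist d (shift d z ω) (x - z) (y - z) ≤ graphDist d ω x y := by
  refine sInf_le_sInf ?_
  rintro _ ⟨k, rfl, p, rfl, rfl, hp⟩
  exact ⟨k, rfl, fun j => p j - z, rfl, rfl, hp.shift z⟩

lemma abs_apply_le_nrm (x : Fin d → ℤ) (i : Fin d) : |(x i : ℝ)| ≤ nrm d x := by
  simpa [nrm, toE] using PiLp.norm_apply_le (toE d x) i

lemma sum_abs_apply_le_mul_nrm (x : Fin d → ℤ) : ∑ i, |(x i : ℝ)| ≤ d * nrm d x := by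
  simpa using Finset.sum_le_sum fun i (_ : i ∈ Finset.univ) => abs_apply_le_nrm x i

lemma nrm_sub_comm (x y : Fin d → ℤ) : nrm d (x - y) = nrm d (y - x) := by
  rw [← neg_sub, nrm, nrm, show toE d (-(y - x)) = -toE d (y - x) from ?_, norm_neg]
  ext i
  simp [toE]

lemma tsum_pi_prod_eq_pow {α : Type*} (f : α → ℝ≥0∞) :
    ∀ m : ℕ, ∑' w : Fin m → α, ∏ i, f (w i) = (∑' a, f a) ^ m
  | 0 => by simp
  | m + 1 => by
    rw [← (Fin.consEquiv fun _ => α).tsum_eq, ENNReal.tsum_prod', pow_succ',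
      ← ENNReal.tsum_mul_right, ← tsum_pi_prod_eq_pow f m]
    refine tsum_congr fun a => ?_
    rw [← ENNReal.tsum_mul_left]
    refine tsum_congr fun w => ?_
    simp [Fin.prod_univ_succ, Fin.consEquiv_apply]

lemma tsum_tsum_mul_sub {G : Type*} [AddGroup G] (f g : G → ℝ≥0∞) :
    ∑' z, ∑' y, f z * g (y - z) = (∑' z, f z) * ∑' w, g w := by
  have hshift : ∀ z, ∑' y, g (y - z) = ∑' w, g w := fun z => (Equiv.subRight z).tsum_eq g
  simp only [ENNReal.tsum_mul_left, hshift, ENNReal.tsum_mul_right]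

lemma summable_exp_neg_mul_abs_int {a : ℝ} (ha : 0 < a) :
    Summable fun k : ℤ => Real.exp (-(a * |(k : ℝ)|)) := by
  have h : Summable fun n : ℕ => Real.exp (n * -a) :=
    Real.summable_exp_nat_mul_iff.mpr (by linarith)
  refine .of_nat_of_neg (h.congr fun n => ?_) (h.congr fun n => ?_) <;> simp [mul_comm]

lemma tsum_exp_neg_mul_nrm_ne_top {b : ℝ} (hb : 0 < b) :
    ∑' w : Fin d → ℤ, ENNReal.ofReal (Real.exp (-(b * nrm d w))) ≠ ⊤ := by
  set f : ℤ → ℝ≥0∞ := fun k => ENNReal.ofReal (Real.exp (-(b / d * |(k : ℝ)|)))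
  have hle : ∀ w : Fin d → ℤ,
      ENNReal.ofReal (Real.exp (-(b * nrm d w))) ≤ ∏ i, f (w i) := by
    intro w
    rw [← ENNReal.ofReal_prod_of_nonneg fun _ _ => (Real.exp_pos _).le, ← Real.exp_sum]
    refine ENNReal.ofReal_le_ofReal (Real.exp_le_exp.mpr ?_)
    rw [Finset.sum_neg_distrib, ← Finset.mul_sum, neg_le_neg_iff]
    rcases d.eq_zero_or_pos with rfl | hd
    · simp [mul_nonneg hb.le (norm_nonneg (toE 0 w)), nrm]
    calc b / d * ∑ i, |(w i : ℝ)| ≤ b / d * (d * nrm d w) := by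
          gcongr; exact sum_abs_apply_le_mul_nrm w
      _ = b * nrm d w := by field_simp
  refine ne_top_of_le_ne_top ?_ (ENNReal.tsum_le_tsum hle)
  rw [tsum_pi_prod_eq_pow]
  rcases d.eq_zero_or_pos with rfl | hd
  · simp
  refine ENNReal.pow_ne_top ?_
  rw [← ENNReal.ofReal_tsum_of_nonneg (fun _ => (Real.exp_pos _).le)
    (summable_exp_neg_mul_abs_int (by positivity))]
  exact ENNReal.ofReal_ne_top

lemma tsum_indicator_nrm_le_le_pow (n : ℕ) :
    ∑' z : Fin d → ℤ, {z | nrm d z ≤ n}.indicator (1 : (Fin d → ℤ) → ℝ≥0∞) z ≤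
      ((2 * n + 1 : ℕ) : ℝ≥0∞) ^ d := by
  have hbox : ∀ z ∉ Finset.Icc (fun _ => -(n : ℤ)) (fun _ => n),
      {z : Fin d → ℤ | nrm d z ≤ n}.indicator (1 : (Fin d → ℤ) → ℝ≥0∞) z = 0 := by
    refine fun z hz => Set.indicator_of_notMem (fun hzn => hz ?_) _
    have hi : ∀ i, -(n : ℤ) ≤ z i ∧ z i ≤ n := fun i => by
      exact_mod_cast abs_le.mp ((abs_apply_le_nrm z i).trans hzn)
    exact Finset.mem_Icc.mpr ⟨fun i => (hi i).1, fun i => (hi i).2⟩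
  rw [tsum_eq_sum hbox]
  calc _ ≤ ∑ _z ∈ Finset.Icc (fun _ => -(n : ℤ)) (fun _ => (n : ℤ)), (1 : ℝ≥0∞) :=
        Finset.sum_le_sum fun z _ => Set.indicator_le_self' (by simp) z
    _ = ((2 * n + 1 : ℕ) : ℝ≥0∞) ^ d := by
        simp only [Finset.sum_const, nsmul_eq_mul, mul_one, Pi.card_Icc, Int.card_Icc,
          Finset.prod_const, Finset.card_univ, Fintype.card_fin]
        norm_cast
        congr 1
        omega

lemma exp_neg_mul_le_inv_pow_mul {c r : ℝ} {n k : ℕ} (hc : 0 < c) (hn : 0 < n)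
    (h : 2 * k / c * Real.log n ≤ r) :
    Real.exp (-(c * r)) ≤ ((n : ℝ) ^ k)⁻¹ * Real.exp (-(c / 2 * r)) := by
  have hkr : k * Real.log n ≤ c / 2 * r := by
    calc k * Real.log n = c / 2 * (2 * k / c * Real.log n) := by field_simp
      _ ≤ c / 2 * r := by gcongr
  calc Real.exp (-(c * r)) = Real.exp (-(c / 2 * r)) * Real.exp (-(c / 2 * r)) := by
        rw [← Real.exp_add]; ring_nf
    _ ≤ Real.exp (-(k * Real.log n)) * Real.exp (-(c / 2 * r)) := by gcongr
    _ = ((n : ℝ) ^ k)⁻¹ * Real.exp (-(c / 2 * r)) := by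
        rw [Real.exp_neg, Real.exp_nat_mul, Real.exp_log (by exact_mod_cast hn)]

lemma summable_two_mul_add_one_pow_div_pow (d : ℕ) :
    Summable fun n : ℕ => (2 * n + 1 : ℝ) ^ d / (n : ℝ) ^ (d + 2) := by
  refine ((Real.summable_one_div_nat_pow.mpr one_lt_two).mul_left (3 ^ d)).of_nonneg_of_le
    (fun n => by positivity) fun n => ?_
  rcases n.eq_zero_or_pos with rfl | hn
  · simp
  have hn' : (1 : ℝ) ≤ n := by exact_mod_cast hn
  calc (2 * n + 1 : ℝ) ^ d / (n : ℝ) ^ (d + 2) ≤ (3 * n) ^ d / (n : ℝ) ^ (d + 2) := by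
        gcongr; linarith
    _ = 3 ^ d * (1 / (n : ℝ) ^ 2) := by
        rw [mul_pow, pow_add]; field_simp

section Probability

variable {Q : Measure (Cfg d)}

lemma measure_short_pair_le_at_origin
    (hQ : ∀ y, MeasurePreserving (shift d y) Q Q) (ρ : ℝ) (z y : Fin d → ℤ) :
    Q {ω | ω z = true ∧ ω y = true ∧
        (graphDist d ω z y : ℝ≥0∞) ≤ ENNReal.ofReal (ρ * nrm d (y - z))} ≤
      Q {ω | ω 0 = true ∧ ω (y - z) = true ∧
        (graphDist d ω 0 (y - z) : ℝ≥0∞) ≤ ENNReal.ofReal (ρ * nrm d (y - z))} := by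
  refine (measure_mono ?_).trans ((hQ z).measure_preimage_le _)
  rintro ω ⟨hz, hy, hdist⟩
  refine ⟨by simpa [shift] using hz, by simpa [shift] using hy, le_trans ?_ hdist⟩
  simpa using ENat.toENNReal_le.mpr (graphDist_shift_le z z y ω)

def shortcutPair (d : ℕ) (ρ c : ℝ) (n : ℕ) (z y : Fin d → ℤ) : Set (Cfg d) :=
  {ω | ω z = true ∧ ω y = true ∧ nrm d z ≤ n ∧ c * Real.log n ≤ nrm d (z - y) ∧
    (graphDist d ω z y : ℝ≥0∞) < ENNReal.ofReal (ρ * nrm d (z - y))}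

def shortcutEvent (d : ℕ) (ρ c : ℝ) (n : ℕ) : Set (Cfg d) :=
  ⋃ z, ⋃ y, shortcutPair d ρ c n z y

def ChemDistBound (Q : Measure (Cfg d)) (ρ c₅ c₆ : ℝ) : Prop :=
  ∀ x : Fin d → ℤ,
    Q {ω | ω 0 = true ∧ ω x = true ∧
        (graphDist d ω 0 x : ℝ≥0∞) ≤ ENNReal.ofReal (ρ * nrm d x)}
      ≤ ENNReal.ofReal (c₅ * Real.exp (-(c₆ * nrm d x)))

variable {ρ c₅ c₆ : ℝ}

lemma measure_shortcutPair_le (hbound : ChemDistBound Q ρ c₅ c₆)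
    (hQ : ∀ y, MeasurePreserving (shift d y) Q Q) (hc₆ : 0 < c₆) {n : ℕ} (hn : 0 < n)
    (z y : Fin d → ℤ) :
    Q (shortcutPair d ρ (2 * ((d : ℝ) + 2) / c₆) n z y) ≤
      ENNReal.ofReal c₅ * ENNReal.ofReal ((n : ℝ) ^ (d + 2))⁻¹ *
        {z | nrm d z ≤ n}.indicator 1 z *
          ENNReal.ofReal (Real.exp (-(c₆ / 2 * nrm d (y - z)))) := by
  by_cases hzy : nrm d z ≤ n ∧ 2 * ((d : ℝ) + 2) / c₆ * Real.log n ≤ nrm d (z - y)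
  swap
  · exact (measure_mono (t := ∅) fun ω hω => hzy ⟨hω.2.2.1, hω.2.2.2.1⟩).trans (by simp)
  have hfar : 2 * ((d + 2 : ℕ) : ℝ) / c₆ * Real.log n ≤ nrm d (y - z) := by
    rw [← nrm_sub_comm]; push_cast; exact hzy.2
  calc _ ≤ Q {ω | ω z = true ∧ ω y = true ∧
        (graphDist d ω z y : ℝ≥0∞) ≤ ENNReal.ofReal (ρ * nrm d (y - z))} :=
        measure_mono fun ω hω => ⟨hω.1, hω.2.1, by rw [nrm_sub_comm]; exact hω.2.2.2.2.le⟩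
    _ ≤ ENNReal.ofReal (c₅ * Real.exp (-(c₆ * nrm d (y - z)))) :=
        (measure_short_pair_le_at_origin hQ ρ z y).trans (hbound (y - z))
    _ ≤ ENNReal.ofReal c₅ *
          ENNReal.ofReal (((n : ℝ) ^ (d + 2))⁻¹ * Real.exp (-(c₆ / 2 * nrm d (y - z)))) := by
        rw [ENNReal.ofReal_mul' (Real.exp_pos _).le]
        gcongr
        exact exp_neg_mul_le_inv_pow_mul hc₆ hn hfar
    _ = _ := by
        rw [Set.indicator_of_mem (show z ∈ {z | nrm d z ≤ n} from hzy.1),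
          ENNReal.ofReal_mul (by positivity), Pi.one_apply, mul_one, mul_assoc]

lemma measure_shortcutEvent_le (hbound : ChemDistBound Q ρ c₅ c₆)
    (hQ : ∀ y, MeasurePreserving (shift d y) Q Q) (hc₆ : 0 < c₆) {n : ℕ} (hn : 0 < n) :
    Q (shortcutEvent d ρ (2 * ((d : ℝ) + 2) / c₆) n) ≤
      ENNReal.ofReal c₅ * ENNReal.ofReal ((2 * n + 1 : ℝ) ^ d / (n : ℝ) ^ (d + 2)) *
        ∑' w : Fin d → ℤ, ENNReal.ofReal (Real.exp (-(c₆ / 2 * nrm d w))) := by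
  calc _ ≤ ∑' z, ∑' y, Q (shortcutPair d ρ (2 * ((d : ℝ) + 2) / c₆) n z y) :=
        (measure_iUnion_le _).trans (ENNReal.tsum_le_tsum fun z => measure_iUnion_le _)
    _ ≤ ∑' z, ∑' y, ENNReal.ofReal c₅ * ENNReal.ofReal ((n : ℝ) ^ (d + 2))⁻¹ *
          {z | nrm d z ≤ n}.indicator 1 z *
            ENNReal.ofReal (Real.exp (-(c₆ / 2 * nrm d (y - z)))) :=
        ENNReal.tsum_le_tsum fun z => ENNReal.tsum_le_tsum fun y =>
          measure_shortcutPair_le hbound hQ hc₆ hn z y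
    _ = ENNReal.ofReal c₅ * ENNReal.ofReal ((n : ℝ) ^ (d + 2))⁻¹ *
          (∑' z, {z | nrm d z ≤ n}.indicator 1 z) *
            ∑' w : Fin d → ℤ, ENNReal.ofReal (Real.exp (-(c₆ / 2 * nrm d w))) := by
        rw [tsum_tsum_mul_sub
          (fun z => ENNReal.ofReal c₅ * ENNReal.ofReal ((n : ℝ) ^ (d + 2))⁻¹ *
            {z | nrm d z ≤ n}.indicator 1 z)
          (fun w => ENNReal.ofReal (Real.exp (-(c₆ / 2 * nrm d w)))), ENNReal.tsum_mul_left]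
    _ ≤ ENNReal.ofReal c₅ * ENNReal.ofReal ((n : ℝ) ^ (d + 2))⁻¹ * (2 * n + 1 : ℕ) ^ d *
          ∑' w : Fin d → ℤ, ENNReal.ofReal (Real.exp (-(c₆ / 2 * nrm d w))) := by
        gcongr; exact tsum_indicator_nrm_le_le_pow n
    _ = _ := by
        rw [div_eq_inv_mul ((2 * n + 1 : ℝ) ^ d), ENNReal.ofReal_mul (by positivity),
          ENNReal.ofReal_pow (by positivity)]
        push_cast
        rw [ENNReal.ofReal_add (by positivity) zero_le_one, ENNReal.ofReal_mul zero_le_two]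
        simp only [ENNReal.ofReal_natCast, ENNReal.ofReal_one, ENNReal.ofReal_ofNat]
        ring

end Probability

theorem graph_dist_euclidean_comparable_general (d : ℕ)
    (Q : Measure (Cfg d)) (hQ : Assumptions d Q)
    (ρ c₅ c₆ : ℝ) (hc₆ : 0 < c₆)
    (hbound : ∀ x : Fin d → ℤ,
      Q {ω | ω 0 = true ∧ ω x = true ∧
          (graphDist d ω 0 x : ℝ≥0∞) ≤ ENNReal.ofReal (ρ * nrm d x)}
        ≤ ENNReal.ofReal (c₅ * Real.exp (-(c₆ * nrm d x)))) :
    ∃ Ωhat : Set (Cfg d), Q Ωhat = 1 ∧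
      ∀ ω ∈ Ωhat, ∃ N : ℕ, 1 ≤ N ∧ ∀ n : ℕ, N ≤ n →
        ∀ z y : Fin d → ℤ, ω z = true → ω y = true → nrm d z ≤ n →
          2 * ((d : ℝ) + 2) / c₆ * Real.log n ≤ nrm d (z - y) →
            ENNReal.ofReal (ρ * nrm d (z - y)) ≤ (graphDist d ω z y : ℝ≥0∞) := by
  have := hQ.prob
  -- scale `0` is skipped: there `log 0 = 0` imposes no lower bound on `|z - y|`
  set bad := fun n : ℕ => shortcutEvent d ρ (2 * ((d : ℝ) + 2) / c₆) (n + 1)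
  have hsum : ∑' n, Q (bad n) ≠ ⊤ := by
    refine ne_top_of_le_ne_top ?_ (ENNReal.tsum_le_tsum fun n =>
      measure_shortcutEvent_le hbound hQ.a3 hc₆ n.succ_pos)
    rw [ENNReal.tsum_mul_right, ENNReal.tsum_mul_left, ← ENNReal.ofReal_tsum_of_nonneg
      (fun n => by positivity)
      ((summable_nat_add_iff 1).mpr (summable_two_mul_add_one_pow_div_pow d))]
    exact ENNReal.mul_ne_top (ENNReal.mul_ne_top ENNReal.ofReal_ne_top ENNReal.ofReal_ne_top)
      (tsum_exp_neg_mul_nrm_ne_top (by positivity))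
  refine ⟨{ω | ∀ᶠ n in atTop, ω ∉ bad n}, ?_, fun ω hω => ?_⟩
  · rw [measure_congr (ae_eq_univ.mpr (ae_eventually_notMem hsum)), measure_univ]
  obtain ⟨N, hN⟩ := eventually_atTop.mp hω
  refine ⟨N + 1, N.succ_pos, fun n hn z y hz hy hzn hfar => not_lt.mp fun hshort => ?_⟩
  obtain ⟨m, rfl⟩ : ∃ m, n = m + 1 := ⟨n - 1, by omega⟩
  exact hN m (by omega) (Set.mem_iUnion₂.mpr ⟨z, y, hz, hy, hzn, hfar, hshort⟩)

/-- With `ρ, c₅, c₆` as in the exponential chemical-distance bound and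
`c₇ = 2(d+2)/c₆`, there is a set `Ω̂₂` of full `Q`-measure such that for every `ω ∈ Ω̂₂`
there is `N(ω) ≥ 1` with: for all `n ≥ N(ω)` and all `z, y ∈ 𝒫(ω)` with `|z| ≤ n` and
`|z - y| ≥ c₇ log n`, one has `d_ω(z, y) ≥ ρ |z - y|`. -/
theorem graph_dist_euclidean_comparable (d : ℕ) (hd : 1 ≤ d)
    (Q : Measure (Cfg d)) (hQ : Assumptions d Q)
    (ρ c₅ c₆ : ℝ) (hρ : 0 < ρ) (hc₅ : 0 < c₅) (hc₆ : 0 < c₆)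
    (hbound : ∀ x : Fin d → ℤ,
      Q {ω | ω 0 = true ∧ ω x = true ∧
          (graphDist d ω 0 x : ℝ≥0∞) ≤ ENNReal.ofReal (ρ * nrm d x)}
        ≤ ENNReal.ofReal (c₅ * Real.exp (-(c₆ * nrm d x)))) :
    ∃ Ωhat : Set (Cfg d), Q Ωhat = 1 ∧
      ∀ ω ∈ Ωhat, ∃ N : ℕ, 1 ≤ N ∧ ∀ n : ℕ, N ≤ n →
        ∀ z y : Fin d → ℤ, ω z = true → ω y = true → nrm d z ≤ n →
          2 * ((d : ℝ) + 2) / c₆ * Real.log n ≤ nrm d (z - y) →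
            ENNReal.ofReal (ρ * nrm d (z - y)) ≤ (graphDist d ω z y : ℝ≥0∞) :=
  graph_dist_euclidean_comparable_general d Q hQ ρ c₅ c₆ hc₆ hbound

end RWDPP
end
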